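/- Let Z_t : 𝕊¹ → ℂ be smooth and define A₀(α) = Im[Z_t, H̃](∂Z̄_t)(α), where H̃ is the circle Hilbert transform. Then A₀(α) = (1/(8π)) ∫₀^{2π} |(Z_t(α) − Z_t(β))/sin((α−β)/2)|² dβ; in particular A₀ ≥ 0, and A₀(α) ≳ ‖Z_t − Av(Z_t)‖_{L²}² for every α, with a universal implicit constant. -/

import Mathlib

open MeasureTheory

/-- `A₀(α) = Im [Z_t, H̃](∂Z̄_t)(α)`, where `[f, H̃]g = f·H̃g − H̃(fg)` is written as the
(absolutely convergent) integral
`([f, H̃]g)(α) = (1/(2πi)) ∫₀^{2π} (f(α) − f(β)) cot((β−α)/2) g(β) dβ`. -/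
noncomputable def A0circ (Zt : ℝ → ℂ) (α : ℝ) : ℝ :=
  ((1 / (2 * (Real.pi : ℂ) * Complex.I)) *
    ∫ β in (0:ℝ)..(2 * Real.pi),
      (Zt α - Zt β) * ((Real.cos ((β - α) / 2) / Real.sin ((β - α) / 2) : ℝ) : ℂ) *
        deriv (fun x => starRingEnd ℂ (Zt x)) β).im

namespace A0proof

lemma bdd_intervalIntegrable {E : Type*} [NormedAddCommGroup E] {f : ℝ → E}
    (hm : AEStronglyMeasurable f MeasureTheory.volume) {a b C : ℝ} (hab : a ≤ b)
    (hC : ∀ x ∈ Set.Icc a b, ‖f x‖ ≤ C) : IntervalIntegrable f MeasureTheory.volume a b := by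
  rw [intervalIntegrable_iff_integrableOn_Icc_of_le hab]
  refine Integrable.mono' (g := fun _ => C) ?_ hm.restrict ?_
  · exact integrableOn_const measure_Icc_lt_top.ne
  · filter_upwards [ae_restrict_mem measurableSet_Icc] with x hx using hC x hx

lemma jordan {x : ℝ} (h0 : 0 ≤ x) (h1 : x ≤ Real.pi) :
    min x (Real.pi - x) ≤ (Real.pi / 2) * Real.sin x := by
  have hπ := Real.pi_pos
  rcases le_total x (Real.pi / 2) with hx | hx
  · have h := Real.mul_le_sin h0 hx
    have h2 : x ≤ (Real.pi / 2) * Real.sin x := by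
      have h3 := mul_le_mul_of_nonneg_left h (le_of_lt (half_pos hπ))
      calc x = (Real.pi / 2) * (2 / Real.pi * x) := by field_simp
        _ ≤ (Real.pi / 2) * Real.sin x := h3
    exact le_trans (min_le_left _ _) h2
  · have h := Real.mul_le_sin (x := Real.pi - x) (by linarith) (by linarith)
    rw [Real.sin_pi_sub] at h
    have h2 : Real.pi - x ≤ (Real.pi / 2) * Real.sin x := by
      have h3 := mul_le_mul_of_nonneg_left h (le_of_lt (half_pos hπ))
      calc Real.pi - x = (Real.pi / 2) * (2 / Real.pi * (Real.pi - x)) := by field_simp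
        _ ≤ (Real.pi / 2) * Real.sin x := h3
    exact le_trans (min_le_right _ _) h2

lemma periodic_forall_le {f : ℝ → ℝ} {T C a : ℝ} (hf : Function.Periodic f T) (hT : 0 < T)
    (h : ∀ x ∈ Set.Icc a (a + T), f x ≤ C) : ∀ x, f x ≤ C := by
  intro x
  obtain ⟨y, hy, hxy⟩ := hf.exists_mem_Ico hT x a
  rw [hxy]; exact h y ⟨hy.1, hy.2.le⟩

lemma re_mul_bound (a b : ℂ) : |a.re * b.re + a.im * b.im| ≤ ‖a‖ * ‖b‖ := by
  have h2 : (0:ℝ) ≤ ‖a‖ * ‖b‖ := by positivity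
  have h1 : (a.re * b.re + a.im * b.im) ^ 2 ≤ (‖a‖ * ‖b‖) ^ 2 := by
    rw [mul_pow, Complex.sq_norm, Complex.sq_norm,
      Complex.normSq_apply, Complex.normSq_apply]
    nlinarith [sq_nonneg (a.re * b.im - a.im * b.re)]
  calc |a.re * b.re + a.im * b.im| = Real.sqrt ((a.re * b.re + a.im * b.im) ^ 2) :=
        (Real.sqrt_sq_eq_abs _).symm
    _ ≤ Real.sqrt ((‖a‖ * ‖b‖) ^ 2) := Real.sqrt_le_sqrt h1
    _ = ‖a‖ * ‖b‖ := Real.sqrt_sq h2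

end A0proof

open A0proof

set_option maxHeartbeats 2000000 in
/-- For smooth `2π`-periodic `Z_t`:
`A₀(α) = (1/(8π)) ∫₀^{2π} |(Z_t(α) − Z_t(β))/sin((α−β)/2)|² dβ`, so `A₀ ≥ 0`, and
`A₀(α) ≳ ‖Z_t − Av(Z_t)‖_{L²}²` with a universal constant. -/
theorem A0_formula_and_lower_bound :
    ∃ c : ℝ, 0 < c ∧ ∀ Zt : ℝ → ℂ, ContDiff ℝ (⊤ : ℕ∞) Zt → Function.Periodic Zt (2 * Real.pi) →
      ∀ α : ℝ,
        A0circ Zt α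
            = (1 / (8 * Real.pi)) *
              (∫ β in (0:ℝ)..(2 * Real.pi),
                ‖(Zt α - Zt β) / ((Real.sin ((α - β) / 2) : ℝ) : ℂ)‖ ^ 2) ∧
        0 ≤ A0circ Zt α ∧
        c * (∫ β in (0:ℝ)..(2 * Real.pi),
              ‖Zt β - (1 / (2 * (Real.pi : ℂ))) * ∫ γ in (0:ℝ)..(2 * Real.pi), Zt γ‖ ^ 2)
          ≤ A0circ Zt α := by
  have pi_pos := Real.pi_pos
  refine ⟨1 / (8 * Real.pi), by positivity, ?_⟩
  intro Zt hZ hper α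
  have h2π : (0:ℝ) < 2 * Real.pi := by linarith
  have hab : α ≤ α + 2 * Real.pi := by linarith
  have hZd : Differentiable ℝ Zt := hZ.differentiable (by simp)
  have hZc : Continuous Zt := hZd.continuous
  have hZ'c : Continuous (deriv Zt) := hZ.continuous_deriv (by simp)
  have hD : ∀ β, HasDerivAt Zt (deriv Zt β) β := fun β => (hZd β).hasDerivAt
  -- periodicity of the derivative
  have hperd : Function.Periodic (deriv Zt) (2 * Real.pi) := by
    intro x
    have he : (fun y => Zt (y + 2 * Real.pi)) = Zt := funext hper
    rw [← deriv_comp_add_const Zt (2 * Real.pi) x, he]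
  -- global bound on the derivative
  obtain ⟨M0, hM0⟩ := isCompact_Icc.exists_bound_of_continuousOn
    (s := Set.Icc 0 (2 * Real.pi)) hZ'c.continuousOn
  set Mr : ℝ := max M0 0 with hMr_def
  have hMr0 : 0 ≤ Mr := le_max_right _ _
  have hMb : ∀ x, ‖deriv Zt x‖ ≤ Mr := by
    refine periodic_forall_le (f := fun x => ‖deriv Zt x‖) (a := 0)
      (fun x => by simp [hperd x]) h2π ?_
    intro x hx
    rw [zero_add] at hx
    exact le_trans (hM0 x hx) (le_max_left _ _)
  -- Lipschitz bound
  have hlip : ∀ x y : ℝ, ‖Zt x - Zt y‖ ≤ Mr * |x - y| := by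
    have hl := lipschitzWith_of_nnnorm_deriv_le (C := Mr.toNNReal) hZd (fun x => by
      rw [← NNReal.coe_le_coe, coe_nnnorm, Real.coe_toNNReal _ hMr0]
      exact hMb x)
    intro x y
    have := hl.dist_le_mul x y
    rwa [dist_eq_norm, Real.dist_eq, Real.coe_toNNReal _ hMr0] at this
  -- key chord bound on [α, α+2π]
  have hchord : ∀ β ∈ Set.Icc α (α + 2 * Real.pi),
      ‖Zt α - Zt β‖ ≤ Mr * Real.pi * Real.sin ((β - α) / 2) := by
    rintro β ⟨hb1, hb2⟩
    have hx0 : 0 ≤ (β - α) / 2 := by linarith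
    have hx1 : (β - α) / 2 ≤ Real.pi := by linarith
    have h1 : ‖Zt α - Zt β‖ ≤ Mr * (β - α) := by
      have := hlip α β
      rwa [abs_sub_comm, abs_of_nonneg (by linarith)] at this
    have h2 : ‖Zt α - Zt β‖ ≤ Mr * (α + 2 * Real.pi - β) := by
      have hz : Zt α = Zt (α + 2 * Real.pi) := (hper α).symm
      rw [hz]
      have := hlip (α + 2 * Real.pi) β
      rwa [abs_of_nonneg (by linarith)] at this
    have hj := jordan hx0 hx1
    rcases le_total ((β - α) / 2) (Real.pi - (β - α) / 2) with hc | hc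
    · rw [min_eq_left hc] at hj; nlinarith
    · rw [min_eq_right hc] at hj; nlinarith
  -- abbreviations (kept as plain lambdas)
  -- s β = sin((β-α)/2), u β = cot((β-α)/2), h β = |Zα - Zβ|², hd = h'
  set s : ℝ → ℝ := fun β => Real.sin ((β - α) / 2) with hs_def
  set u : ℝ → ℝ := fun β => Real.cos ((β - α) / 2) / Real.sin ((β - α) / 2) with hu_def
  set h : ℝ → ℝ := fun β => Complex.normSq (Zt α - Zt β) with hh_def
  set hd : ℝ → ℝ := fun β =>
    -2 * ((Zt α - Zt β).re * (deriv Zt β).re + (Zt α - Zt β).im * (deriv Zt β).im) with hhd_def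
  set g : ℝ → ℂ := fun β =>
    (Zt α - Zt β) * ((Real.cos ((β - α) / 2) / Real.sin ((β - α) / 2) : ℝ) : ℂ) *
      (starRingEnd ℂ (deriv Zt β)) with hg_def
  have harg : ∀ β : ℝ, (β + 2 * Real.pi - α) / 2 = (β - α) / 2 + Real.pi := fun β => by ring
  have hs_per : ∀ β, s (β + 2 * Real.pi) = - s β := by
    intro β; simp only [hs_def]; rw [harg, Real.sin_add_pi]
  have hu_per : Function.Periodic u (2 * Real.pi) := by
    intro β
    simp only [hu_def]
    rw [harg, Real.sin_add_pi, Real.cos_add_pi, neg_div_neg_eq]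
  have hh_per : Function.Periodic h (2 * Real.pi) := by
    intro β; simp only [hh_def]; rw [hper β]
  have hg_per : Function.Periodic g (2 * Real.pi) := by
    intro β
    simp only [hg_def]
    rw [harg, Real.sin_add_pi, Real.cos_add_pi, neg_div_neg_eq, hper β, hperd β]
  -- measurability
  have hcont_half : Continuous (fun β : ℝ => (β - α) / 2) :=
    (continuous_id.sub continuous_const).div_const 2
  have hmeas_u : Measurable u :=
    ((Real.continuous_cos.comp hcont_half).measurable).div
      ((Real.continuous_sin.comp hcont_half).measurable)
  have hcont_s : Continuous s := Real.continuous_sin.comp hcont_half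
  have hcont_h : Continuous h :=
    Complex.continuous_normSq.comp (continuous_const.sub hZc)
  have hcont_hd : Continuous hd := by
    apply Continuous.mul continuous_const
    exact (((Complex.continuous_re.comp (continuous_const.sub hZc)).mul
      (Complex.continuous_re.comp hZ'c)).add
      ((Complex.continuous_im.comp (continuous_const.sub hZc)).mul
      (Complex.continuous_im.comp hZ'c)))
  have hmeas_g : Measurable g := by
    apply Measurable.mul
    apply Measurable.mul
    · exact (continuous_const.sub hZc).measurable
    · exact Complex.measurable_ofReal.comp hmeas_u
    · exact (Complex.continuous_conj.comp hZ'c).measurable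
  -- derivative of h
  have hh' : ∀ β, HasDerivAt h (hd β) β := by
    intro β
    have hF' : HasDerivAt (fun β => Zt α - Zt β) (-(deriv Zt β)) β := by
      exact ((hasDerivAt_const β (Zt α)).sub (hD β)).congr_deriv (by simp)
    have h1 : HasDerivAt (fun β => (Zt α - Zt β).re) (-(deriv Zt β)).re β :=
      Complex.reCLM.hasFDerivAt.comp_hasDerivAt β hF'
    have h2 : HasDerivAt (fun β => (Zt α - Zt β).im) (-(deriv Zt β)).im β :=
      Complex.imCLM.hasFDerivAt.comp_hasDerivAt β hF'
    have hkey := (h1.mul h1).add (h2.mul h2)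
    have e1 : h = fun β => (Zt α - Zt β).re * (Zt α - Zt β).re +
        (Zt α - Zt β).im * (Zt α - Zt β).im := by
      funext β; simp [hh_def, Complex.normSq_apply]
    rw [e1]
    convert hkey using 1
    · rfl
    · rfl
    · rfl
    simp only [hhd_def, Complex.neg_re, Complex.neg_im]
    ring
  -- derivative of u off the singular set
  have hu' : ∀ β, Real.sin ((β - α) / 2) ≠ 0 →
      HasDerivAt u (-(1 / (2 * Real.sin ((β - α) / 2) ^ 2))) β := by
    intro β hs0
    have hin : HasDerivAt (fun β : ℝ => (β - α) / 2) (1 / 2) β := by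
      simpa using ((hasDerivAt_id β).sub_const α).div_const 2
    have hc : HasDerivAt (fun β : ℝ => Real.cos ((β - α) / 2))
        (-Real.sin ((β - α) / 2) * (1 / 2)) β := (Real.hasDerivAt_cos _).comp β hin
    have hss : HasDerivAt (fun β : ℝ => Real.sin ((β - α) / 2))
        (Real.cos ((β - α) / 2) * (1 / 2)) β := (Real.hasDerivAt_sin _).comp β hin
    have hdiv := hc.div hss hs0
    convert hdiv using 1
    · rfl
    · rfl
    · rfl
    have hsc := Real.sin_sq_add_cos_sq ((β - α) / 2)
    field_simp
    nlinarith [hsc]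
  -- integrability of u * hd
  have hint_j1 : IntervalIntegrable (fun β => u β * hd β) volume α (α + 2 * Real.pi) := by
    apply bdd_intervalIntegrable ((hmeas_u.mul hcont_hd.measurable).aestronglyMeasurable)
      hab (C := 2 * Real.pi * Mr ^ 2)
    intro x hx
    by_cases hs0 : Real.sin ((x - α) / 2) = 0
    · have : u x = 0 := by simp [hu_def, hs0]
      rw [Pi.mul_apply, this, zero_mul, norm_zero]; positivity
    · have hx0 : 0 ≤ (x - α) / 2 := by have := hx.1; linarith
      have hx1 : (x - α) / 2 ≤ Real.pi := by have := hx.2; linarith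
      have hspos : 0 < Real.sin ((x - α) / 2) :=
        lt_of_le_of_ne (Real.sin_nonneg_of_nonneg_of_le_pi hx0 hx1) (Ne.symm hs0)
      have hub : |u x| ≤ 1 / Real.sin ((x - α) / 2) := by
        rw [hu_def, abs_div, abs_of_pos hspos]
        gcongr
        exact Real.abs_cos_le_one _
      have hdb : |hd x| ≤ 2 * (Mr * Real.pi * Real.sin ((x - α) / 2)) * Mr := by
        have h1 := re_mul_bound (Zt α - Zt x) (deriv Zt x)
        have h2 := hchord x hx
        have h3 := hMb x
        simp only [hhd_def]
        rw [neg_mul, abs_neg, abs_mul, abs_two]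
        have hFn : (0:ℝ) ≤ ‖Zt α - Zt x‖ := norm_nonneg _
        nlinarith
      calc ‖u x * hd x‖ = |u x| * |hd x| := by rw [Real.norm_eq_abs, abs_mul]
        _ ≤ (1 / Real.sin ((x - α) / 2)) * (2 * (Mr * Real.pi * Real.sin ((x - α) / 2)) * Mr) := by
            apply mul_le_mul hub hdb (abs_nonneg _)
            positivity
        _ = 2 * Real.pi * Mr ^ 2 := by field_simp
  -- integrability of h / s²
  have hint_j2 : IntervalIntegrable (fun β => h β / s β ^ 2) volume α (α + 2 * Real.pi) := by
    apply bdd_intervalIntegrable ((hcont_h.measurable.div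
      ((hcont_s.pow 2).measurable)).aestronglyMeasurable) hab (C := (Mr * Real.pi) ^ 2)
    intro x hx
    by_cases hs0 : Real.sin ((x - α) / 2) = 0
    · have : s x = 0 := by simp [hs_def, hs0]
      rw [Pi.div_apply, Pi.pow_apply, this]; simp; positivity
    · have hx0 : 0 ≤ (x - α) / 2 := by have := hx.1; linarith
      have hx1 : (x - α) / 2 ≤ Real.pi := by have := hx.2; linarith
      have hspos : 0 < Real.sin ((x - α) / 2) :=
        lt_of_le_of_ne (Real.sin_nonneg_of_nonneg_of_le_pi hx0 hx1) (Ne.symm hs0)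
      have hFb := hchord x hx
      have hh_eq : h x = ‖Zt α - Zt x‖ ^ 2 := by
        simp [hh_def, Complex.sq_norm]
      have hnn : 0 ≤ h x / s x ^ 2 := by
        apply div_nonneg (by rw [hh_eq]; positivity) (by positivity)
      rw [Pi.div_apply, Pi.pow_apply, Real.norm_eq_abs, abs_of_nonneg hnn]
      rw [div_le_iff₀ (by simp only [hs_def]; positivity)]
      rw [hh_eq]
      simp only [hs_def]
      nlinarith [norm_nonneg (Zt α - Zt x)]
  -- integrability of g
  have hint_g : IntervalIntegrable g volume α (α + 2 * Real.pi) := by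
    apply bdd_intervalIntegrable hmeas_g.aestronglyMeasurable hab (C := Real.pi * Mr ^ 2)
    intro x hx
    by_cases hs0 : Real.sin ((x - α) / 2) = 0
    · have : g x = 0 := by
        simp only [hg_def]; rw [hs0, div_zero, Complex.ofReal_zero, mul_zero, zero_mul]
      rw [this, norm_zero]; positivity
    · have hx0 : 0 ≤ (x - α) / 2 := by have := hx.1; linarith
      have hx1 : (x - α) / 2 ≤ Real.pi := by have := hx.2; linarith
      have hspos : 0 < Real.sin ((x - α) / 2) :=
        lt_of_le_of_ne (Real.sin_nonneg_of_nonneg_of_le_pi hx0 hx1) (Ne.symm hs0)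
      have hFb := hchord x hx
      have h3 := hMb x
      simp only [hg_def]
      rw [norm_mul, norm_mul]
      have hcos : ‖((Real.cos ((x - α) / 2) / Real.sin ((x - α) / 2) : ℝ) : ℂ)‖
          ≤ 1 / Real.sin ((x - α) / 2) := by
        rw [Complex.norm_real, Real.norm_eq_abs, abs_div, abs_of_pos hspos]
        gcongr
        exact Real.abs_cos_le_one _
      have hconj : ‖starRingEnd ℂ (deriv Zt x)‖ ≤ Mr := by
        rw [RingHomIsometric.norm_map]; exact h3
      calc ‖Zt α - Zt x‖ * ‖((Real.cos ((x - α) / 2) / Real.sin ((x - α) / 2) : ℝ) : ℂ)‖ *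
            ‖starRingEnd ℂ (deriv Zt x)‖
          ≤ (Mr * Real.pi * Real.sin ((x - α) / 2)) * (1 / Real.sin ((x - α) / 2)) * Mr := by
            apply mul_le_mul ?_ hconj (norm_nonneg _) (by positivity)
            apply mul_le_mul hFb hcos (norm_nonneg _) (by positivity)
        _ = Real.pi * Mr ^ 2 := by field_simp
  -- φ = u * h vanishes at the endpoints and has derivative u*hd - h/(2 s²) inside
  set φ : ℝ → ℝ := fun β => u β * h β with hφ_def
  have hφa : φ α = 0 := by
    simp only [hφ_def, hu_def]
    rw [show (α - α) / 2 = 0 by ring, Real.sin_zero, div_zero, zero_mul]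
  have hφb : φ (α + 2 * Real.pi) = 0 := by
    simp only [hφ_def, hu_def]
    rw [show (α + 2 * Real.pi - α) / 2 = Real.pi by ring, Real.sin_pi, div_zero, zero_mul]
  have hφderiv : ∀ x ∈ Set.Ioo α (α + 2 * Real.pi),
      HasDerivAt φ (u x * hd x - h x / (2 * s x ^ 2)) x := by
    intro x hx
    have hx0 : 0 < (x - α) / 2 := by have := hx.1; linarith
    have hx1 : (x - α) / 2 < Real.pi := by have := hx.2; linarith
    have hspos : 0 < Real.sin ((x - α) / 2) := Real.sin_pos_of_pos_of_lt_pi hx0 hx1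
    have hkey := (hu' x hspos.ne').mul (hh' x)
    convert hkey using 1
    · rfl
    · rfl
    · rfl
    simp only [hs_def]
    ring
  have hφ_small : ∀ β ∈ Set.Icc α (α + 2 * Real.pi),
      ‖φ β‖ ≤ Mr * Real.pi * ‖Zt α - Zt β‖ := by
    intro β hβ
    by_cases hs0 : Real.sin ((β - α) / 2) = 0
    · have hz : φ β = 0 := by simp only [hφ_def, hu_def]; rw [hs0, div_zero, zero_mul]
      rw [hz, norm_zero]; positivity
    · have hx0 : 0 ≤ (β - α) / 2 := by have := hβ.1; linarith
      have hx1 : (β - α) / 2 ≤ Real.pi := by have := hβ.2; linarith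
      have hspos : 0 < Real.sin ((β - α) / 2) :=
        lt_of_le_of_ne (Real.sin_nonneg_of_nonneg_of_le_pi hx0 hx1) (Ne.symm hs0)
      have hub : |u β| ≤ 1 / Real.sin ((β - α) / 2) := by
        rw [hu_def, abs_div, abs_of_pos hspos]
        gcongr
        exact Real.abs_cos_le_one _
      have hhb : h β ≤ (Mr * Real.pi * Real.sin ((β - α) / 2)) * ‖Zt α - Zt β‖ := by
        have he : h β = ‖Zt α - Zt β‖ * ‖Zt α - Zt β‖ := by
          simp only [hh_def]
          rw [← Complex.sq_norm, sq]
        rw [he]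
        exact mul_le_mul_of_nonneg_right (hchord β hβ) (norm_nonneg _)
      have hh0 : 0 ≤ h β := Complex.normSq_nonneg _
      calc ‖φ β‖ = |u β| * h β := by
            rw [hφ_def, Real.norm_eq_abs, abs_mul, abs_of_nonneg hh0]
        _ ≤ (1 / Real.sin ((β - α) / 2)) *
              ((Mr * Real.pi * Real.sin ((β - α) / 2)) * ‖Zt α - Zt β‖) := by
            apply mul_le_mul hub hhb hh0 (by positivity)
        _ = Mr * Real.pi * ‖Zt α - Zt β‖ := by
            field_simp
  have hφcont : ContinuousOn φ (Set.Icc α (α + 2 * Real.pi)) := by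
    intro x hx
    rcases eq_or_ne x α with rfl | hxa
    · rw [ContinuousWithinAt, hφa]
      apply squeeze_zero_norm' (a := fun β => Mr * Real.pi * ‖Zt x - Zt β‖)
      · filter_upwards [eventually_mem_nhdsWithin] with β hβ using hφ_small β hβ
      · have hcont2 : Continuous (fun β => Mr * Real.pi * ‖Zt x - Zt β‖) :=
          continuous_const.mul ((continuous_const.sub hZc).norm)
        have := (hcont2.tendsto x).mono_left
          (nhdsWithin_le_nhds (s := Set.Icc x (x + 2 * Real.pi)))
        simpa using this
    rcases eq_or_ne x (α + 2 * Real.pi) with rfl | hxb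
    · rw [ContinuousWithinAt, hφb]
      apply squeeze_zero_norm' (a := fun β => Mr * Real.pi * ‖Zt α - Zt β‖)
      · filter_upwards [eventually_mem_nhdsWithin] with β hβ using hφ_small β hβ
      · have hcont2 : Continuous (fun β => Mr * Real.pi * ‖Zt α - Zt β‖) :=
          continuous_const.mul ((continuous_const.sub hZc).norm)
        have := (hcont2.tendsto (α + 2 * Real.pi)).mono_left
          (nhdsWithin_le_nhds (s := Set.Icc α (α + 2 * Real.pi)))
        simpa [hper α] using this
    · have hx' : x ∈ Set.Ioo α (α + 2 * Real.pi) :=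
        ⟨lt_of_le_of_ne hx.1 (Ne.symm hxa), lt_of_le_of_ne hx.2 hxb⟩
      exact ((hφderiv x hx').continuousAt).continuousWithinAt
  -- FTC
  have hint_j2' : IntervalIntegrable (fun β => h β / (2 * s β ^ 2)) volume α (α + 2 * Real.pi) := by
    have he : (fun β => h β / (2 * s β ^ 2)) = fun β => (1 / 2) * (h β / s β ^ 2) := by
      funext β; rw [div_mul_div_comm, one_mul]
    rw [he]; exact hint_j2.const_mul (1 / 2)
  have hFTC : (∫ β in α..(α + 2 * Real.pi), (u β * hd β - h β / (2 * s β ^ 2))) = 0 := by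
    have hf := intervalIntegral.integral_eq_sub_of_hasDeriv_right_of_le hab hφcont
      (fun x hx => (hφderiv x hx).hasDerivWithinAt) (hint_j1.sub hint_j2')
    rw [hφa, hφb] at hf
    simpa using hf
  have hsplit : (∫ β in α..(α + 2 * Real.pi), u β * hd β)
      = (1 / 2) * ∫ β in α..(α + 2 * Real.pi), h β / s β ^ 2 := by
    have h1 := intervalIntegral.integral_sub hint_j1 hint_j2'
    have h2 : (∫ β in α..(α + 2 * Real.pi), u β * hd β)
        = ∫ β in α..(α + 2 * Real.pi), h β / (2 * s β ^ 2) := by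
      have h3 := h1.symm.trans hFTC
      linarith [h3]
    rw [h2]
    rw [intervalIntegral.integral_congr
      (g := fun β => (1 / 2) * (h β / s β ^ 2))
      (fun β _ => by
        show h β / (2 * s β ^ 2) = 1 / 2 * (h β / s β ^ 2)
        rw [div_mul_div_comm, one_mul])]
    rw [intervalIntegral.integral_const_mul]
  -- identify A0circ
  have hconjd : ∀ β, deriv (fun x => starRingEnd ℂ (Zt x)) β = starRingEnd ℂ (deriv Zt β) := by
    intro β
    have hder : HasDerivAt (fun x => starRingEnd ℂ (Zt x)) (starRingEnd ℂ (deriv Zt β)) β :=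
      Complex.conjCLE.toContinuousLinearMap.hasFDerivAt.comp_hasDerivAt β (hD β)
    exact hder.deriv
  have hA0g : A0circ Zt α
      = ((1 / (2 * (Real.pi : ℂ) * Complex.I)) * ∫ β in (0:ℝ)..(2 * Real.pi), g β).im := by
    unfold A0circ
    congr 2
    exact intervalIntegral.integral_congr (fun β _ => by rw [hconjd β])
  have hshift : (∫ β in (0:ℝ)..(2 * Real.pi), g β) = ∫ β in α..(α + 2 * Real.pi), g β := by
    simpa using hg_per.intervalIntegral_add_eq 0 α
  have hgre : ∀ β, (g β).re = -(1 / 2) * (u β * hd β) := by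
    intro β
    simp only [hg_def, hhd_def, hu_def, Complex.mul_re, Complex.mul_im, Complex.ofReal_re,
      Complex.ofReal_im, Complex.conj_re, Complex.conj_im, Complex.sub_re, Complex.sub_im]
    ring
  have hIre : (∫ β in α..(α + 2 * Real.pi), g β).re
      = ∫ β in α..(α + 2 * Real.pi), (g β).re :=
    (Complex.reCLM.intervalIntegral_comp_comm hint_g).symm
  have him : ∀ z : ℂ, ((1 / (2 * (Real.pi : ℂ) * Complex.I)) * z).im
      = -(1 / (2 * Real.pi)) * z.re := by
    intro z
    have e : (1 / (2 * (Real.pi : ℂ) * Complex.I)) = ((-(1 / (2 * Real.pi)) : ℝ) : ℂ) * Complex.I := by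
      rw [one_div, mul_inv, Complex.inv_I]
      have hπC : ((Real.pi : ℂ)) ≠ 0 := Complex.ofReal_ne_zero.mpr Real.pi_ne_zero
      push_cast
      field_simp
    rw [e]
    simp [Complex.mul_im, Complex.mul_re]
  have hA0 : A0circ Zt α
      = (1 / (8 * Real.pi)) * ∫ β in α..(α + 2 * Real.pi), h β / s β ^ 2 := by
    rw [hA0g, hshift, him, hIre]
    rw [intervalIntegral.integral_congr (g := fun β => -(1 / 2) * (u β * hd β))
      (fun β _ => hgre β)]
    rw [intervalIntegral.integral_const_mul, hsplit]
    ring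
  -- rewrite the goal integrand
  have hnorm_eq : ∀ β, ‖(Zt α - Zt β) / ((Real.sin ((α - β) / 2) : ℝ) : ℂ)‖ ^ 2
      = h β / s β ^ 2 := by
    intro β
    have e : Real.sin ((α - β) / 2) = - Real.sin ((β - α) / 2) := by
      rw [show (α - β) / 2 = -((β - α) / 2) by ring, Real.sin_neg]
    by_cases hs0 : Real.sin ((β - α) / 2) = 0
    · rw [e, hs0]
      simp [hs_def, hs0]
    · rw [e, norm_div, Complex.norm_real, Real.norm_eq_abs, abs_neg, div_pow, sq_abs]
      simp only [hs_def, hh_def]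
      rw [Complex.sq_norm]
  have hdper : Function.Periodic (fun β => h β / s β ^ 2) (2 * Real.pi) := by
    intro β
    show h (β + 2 * Real.pi) / s (β + 2 * Real.pi) ^ 2 = h β / s β ^ 2
    rw [hh_per β, hs_per β, neg_sq]
  have hJ : (∫ β in (0:ℝ)..(2 * Real.pi),
        ‖(Zt α - Zt β) / ((Real.sin ((α - β) / 2) : ℝ) : ℂ)‖ ^ 2)
      = ∫ β in α..(α + 2 * Real.pi), h β / s β ^ 2 := by
    rw [intervalIntegral.integral_congr (g := fun β => h β / s β ^ 2)
      (fun β _ => hnorm_eq β)]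
    simpa using hdper.intervalIntegral_add_eq 0 α
  have part1 : A0circ Zt α = (1 / (8 * Real.pi)) *
      (∫ β in (0:ℝ)..(2 * Real.pi),
        ‖(Zt α - Zt β) / ((Real.sin ((α - β) / 2) : ℝ) : ℂ)‖ ^ 2) := by
    rw [hJ]; exact hA0
  have part2 : 0 ≤ A0circ Zt α := by
    rw [part1]
    apply mul_nonneg (by positivity)
    apply intervalIntegral.integral_nonneg (le_of_lt h2π)
    intro x _
    positivity
  refine ⟨part1, part2, ?_⟩
  -- lower bound
  set m : ℂ := (1 / (2 * (Real.pi : ℂ))) * ∫ γ in (0:ℝ)..(2 * Real.pi), Zt γ with hm_def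
  have hKper : Function.Periodic (fun β => Complex.normSq (Zt β - m)) (2 * Real.pi) := by
    intro β
    show Complex.normSq (Zt (β + 2 * Real.pi) - m) = Complex.normSq (Zt β - m)
    rw [hper β]
  have hK : (∫ β in (0:ℝ)..(2 * Real.pi), ‖Zt β - m‖ ^ 2)
      = ∫ β in α..(α + 2 * Real.pi), Complex.normSq (Zt β - m) := by
    rw [intervalIntegral.integral_congr (g := fun β => Complex.normSq (Zt β - m))
      (fun β _ => by rw [Complex.sq_norm])]
    simpa using hKper.intervalIntegral_add_eq 0 α
  have hzero : (∫ β in α..(α + 2 * Real.pi), (Zt β - m)) = 0 := by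
    rw [intervalIntegral.integral_sub (hZc.intervalIntegrable _ _) intervalIntegrable_const,
      intervalIntegral.integral_const]
    have hsh : (∫ β in α..(α + 2 * Real.pi), Zt β) = ∫ γ in (0:ℝ)..(2 * Real.pi), Zt γ := by
      simpa using hper.intervalIntegral_add_eq α 0
    rw [hsh, hm_def, show α + 2 * Real.pi - α = 2 * Real.pi by ring, Complex.real_smul,
      sub_eq_zero]
    have hπC : ((Real.pi : ℂ)) ≠ 0 := Complex.ofReal_ne_zero.mpr Real.pi_ne_zero
    push_cast
    field_simp
  set w : ℂ := Zt α with hw_def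
  set L : ℂ →L[ℝ] ℝ :=
    Complex.reCLM.comp ((ContinuousLinearMap.mul ℝ ℂ).flip (starRingEnd ℂ (w - m))) with hL_def
  have hLapp : ∀ z : ℂ, L z = (z * starRingEnd ℂ (w - m)).re := fun z => rfl
  have hexp : ∀ β, h β = Complex.normSq (Zt β - m) +
      (Complex.normSq (w - m) - 2 * L (Zt β - m)) := by
    intro β
    rw [hLapp]
    simp only [hh_def, hw_def, Complex.normSq_apply, Complex.mul_re, Complex.sub_re,
      Complex.sub_im, Complex.conj_re, Complex.conj_im]
    ring
  have hcontK : Continuous (fun β => Complex.normSq (Zt β - m)) :=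
    Complex.continuous_normSq.comp (hZc.sub continuous_const)
  have hcontL : Continuous (fun β => 2 * L (Zt β - m)) :=
    continuous_const.mul (L.continuous.comp (hZc.sub continuous_const))
  have hsum : (∫ β in α..(α + 2 * Real.pi), h β)
      = (∫ β in α..(α + 2 * Real.pi), Complex.normSq (Zt β - m))
        + ∫ β in α..(α + 2 * Real.pi), (Complex.normSq (w - m) - 2 * L (Zt β - m)) := by
    rw [← intervalIntegral.integral_add (hcontK.intervalIntegrable _ _)
      ((show Continuous (fun β => Complex.normSq (w - m) - 2 * L (Zt β - m)) from continuous_const.sub hcontL).intervalIntegrable _ _)]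
    exact intervalIntegral.integral_congr (fun β _ => hexp β)
  have hR : (∫ β in α..(α + 2 * Real.pi), (Complex.normSq (w - m) - 2 * L (Zt β - m)))
      = 2 * Real.pi * Complex.normSq (w - m) := by
    rw [intervalIntegral.integral_sub intervalIntegrable_const
      (hcontL.intervalIntegrable _ _), intervalIntegral.integral_const]
    have hz : (∫ β in α..(α + 2 * Real.pi), 2 * L (Zt β - m)) = 0 := by
      rw [intervalIntegral.integral_const_mul]
      rw [L.intervalIntegral_comp_comm ((show Continuous (fun β => Zt β - m) from hZc.sub continuous_const).intervalIntegrable _ _),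
        hzero, map_zero, mul_zero]
    rw [hz, sub_zero, smul_eq_mul]
    ring
  have hstep1 : (∫ β in α..(α + 2 * Real.pi), Complex.normSq (Zt β - m))
      ≤ ∫ β in α..(α + 2 * Real.pi), h β := by
    rw [hsum, hR]
    nlinarith [Complex.normSq_nonneg (w - m), h2π]
  have hstep2 : (∫ β in α..(α + 2 * Real.pi), h β)
      ≤ ∫ β in α..(α + 2 * Real.pi), h β / s β ^ 2 := by
    apply intervalIntegral.integral_mono_on hab (hcont_h.intervalIntegrable _ _) hint_j2
    intro x hx
    by_cases hs0 : Real.sin ((x - α) / 2) = 0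
    · have hx0 : 0 ≤ (x - α) / 2 := by have := hx.1; linarith
      have hx1 : (x - α) / 2 ≤ Real.pi := by have := hx.2; linarith
      have hF0 : h x = 0 := by
        rcases lt_or_eq_of_le hx1 with hlt | heq
        · have hz := (Real.sin_eq_zero_iff_of_lt_of_lt (by linarith) hlt).1 hs0
          have : x = α := by linarith
          simp [hh_def, hw_def, this]
        · have : x = α + 2 * Real.pi := by linarith
          simp only [hh_def, hw_def, this, hper α, sub_self, map_zero]
      rw [hF0]
      simp [hs_def, hs0]
    · have hx0 : 0 ≤ (x - α) / 2 := by have := hx.1; linarith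
      have hx1 : (x - α) / 2 ≤ Real.pi := by have := hx.2; linarith
      have hspos : 0 < Real.sin ((x - α) / 2) :=
        lt_of_le_of_ne (Real.sin_nonneg_of_nonneg_of_le_pi hx0 hx1) (Ne.symm hs0)
      rw [le_div_iff₀ (by simp only [hs_def]; positivity)]
      have hs1 : s x ^ 2 ≤ 1 := by simp only [hs_def]; exact Real.sin_sq_le_one _
      have hh0 : 0 ≤ h x := Complex.normSq_nonneg _
      nlinarith
  calc (1 / (8 * Real.pi)) * (∫ β in (0:ℝ)..(2 * Real.pi), ‖Zt β - m‖ ^ 2)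
      = (1 / (8 * Real.pi)) * ∫ β in α..(α + 2 * Real.pi), Complex.normSq (Zt β - m) := by
        rw [hK]
    _ ≤ (1 / (8 * Real.pi)) * ∫ β in α..(α + 2 * Real.pi), h β / s β ^ 2 := by
        apply mul_le_mul_of_nonneg_left (hstep1.trans hstep2) (by positivity)
    _ = A0circ Zt α := hA0.symm
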